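/- arXiv:0806.1307 — 7 statements merged into one kernel-verified Lean document; each statement's English description precedes it below -/
import Mathlib

section
/- Let T : X →→ X* be a regular maximal monotone multifunction and S : X →→ X* a bounded maximal monotone multifunction (i.e., there is M such that ‖u*‖ ≤ M for all (y, u*) ∈ G(S)). Then every pair (x, x*) ∈ X × X* that is monotonically related to G(T + S) satisfies L(x, x*, T) ≤ M, and hence x ∈ D_T. -/
open scoped ENNReal
open NormedSpace Pointwise

variable {X : Type*} [NormedAddCommGroup X] [NormedSpace ℝ X] [CompleteSpace X]

/-- `T` is a monotone multifunction. -/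
def IsMonotoneOp (T : X → Set (StrongDual ℝ X)) : Prop :=
  ∀ ⦃x xs y ys⦄, xs ∈ T x → ys ∈ T y → 0 ≤ (xs - ys) (x - y)

/-- `T` is a maximal monotone multifunction. -/
def IsMaxMonotoneOp (T : X → Set (StrongDual ℝ X)) : Prop :=
  IsMonotoneOp T ∧ ∀ x xs, (∀ y ys, ys ∈ T y → 0 ≤ (xs - ys) (x - y)) → xs ∈ T x

/-- L(x, x*, T). -/
noncomputable def Lnum (T : X → Set (StrongDual ℝ X)) (x : X) (xs : StrongDual ℝ X) : ℝ≥0∞ :=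
  ⨆ (y : X) (ys : StrongDual ℝ X) (_ : ys ∈ T y) (_ : y ≠ x),
    ENNReal.ofReal ((xs - ys) (y - x) / ‖x - y‖)

/-- d(x*, T(x)). -/
noncomputable def dnum (T : X → Set (StrongDual ℝ X)) (x : X) (xs : StrongDual ℝ X) : ℝ≥0∞ :=
  ⨅ (ys : StrongDual ℝ X) (_ : ys ∈ T x), ENNReal.ofReal ‖ys - xs‖

def IsRegularOp (T : X → Set (StrongDual ℝ X)) : Prop :=
  ∀ x xs, Lnum T x xs = dnum T x xs

def subdiff (f : X → ℝ) (z : X) : Set (StrongDual ℝ X) :=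
  {zs | ∀ w, f z + zs (w - z) ≤ f w}

/-- T^ε enlargement. -/
def Te (T : X → Set (StrongDual ℝ X)) (ε : ℝ) (x : X) : Set (StrongDual ℝ X) :=
  {xs | ∀ y ys, ys ∈ T y → -(ε * ‖x - y‖) ≤ (xs - ys) (x - y)}

/-- T_ε enlargement. -/
def Tlow (T : X → Set (StrongDual ℝ X)) (ε : ℝ) (x : X) : Set (StrongDual ℝ X) :=
  {xs | ∀ y ys, ys ∈ T y → -ε ≤ (xs - ys) (x - y)}

/-
The bound on `L(x, x*, T)` comes from `S` having, at every point, a value of norm at most `M`: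
by the Debrunner–Flor lemma there is a functional of norm `≤ M` monotonically related to the graph
of `S` at any prescribed point, and maximality puts it in `S y`. Testing the relation of `(x, x*)`
with `G(T + S)` at `(y, y* + w)` then gives `⟨x* - y*, y - x⟩ ≤ ⟨w, y - x⟩ ≤ M ‖x - y‖`.
Regularity turns `L(x, x*, T) < ∞` into `d(x*, T x) < ∞`, so `T x` is nonempty.

The Debrunner–Flor lemma reduces, by weak-* compactness of the dual ball, to finitely many points
`(zᵢ, zᵢ*)`; there a separation argument in `ℝⁿ` yields convex weights `tᵢ`, and monotonicity
makes `∑ᵢ tᵢ ⟨zᵢ*, y - zᵢ⟩ ≤ M ‖y - ∑ᵢ tᵢ zᵢ‖`, which a norming functional contradicts.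
-/

theorem exists_mem_stdSimplex_forall_pos {ι : Type*} [Fintype ι] {C : Set (ι → ℝ)}
    (hCc : IsCompact C) (hCv : Convex ℝ C) (hne : C.Nonempty) (hpos : ∀ c ∈ C, ∃ i, 0 < c i) :
    ∃ t ∈ stdSimplex ℝ ι, ∀ c ∈ C, 0 < ∑ i, t i * c i := by
  classical
  have hdisj : Disjoint C (Set.Iic 0) := Set.disjoint_left.2 fun c hc hc0 => by
    obtain ⟨i, hi⟩ := hpos c hc
    exact hi.not_ge (hc0 i)
  obtain ⟨f, u, v, hfC, huv, hfO⟩ :=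
    geometric_hahn_banach_compact_closed hCv hCc (convex_Iic 0) isClosed_Iic hdisj
  have hv : v < 0 := by simpa using hfO 0 Set.self_mem_Iic
  set e : ι → ι → ℝ := fun i j => if i = j then 1 else 0
  set a : ι → ℝ := fun i => -f (e i)
  have ha : ∀ i, 0 ≤ a i := by
    intro i
    by_contra! hi
    have hfi : 0 < f (e i) := neg_neg_iff_pos.1 hi
    have hmem : (v / f (e i)) • e i ∈ Set.Iic 0 := fun j => by
      have : v / f (e i) ≤ 0 := div_nonpos_of_nonpos_of_nonneg hv.le hfi.le
      simp only [Pi.smul_apply, smul_eq_mul, Pi.zero_apply, e]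
      split_ifs <;> linarith
    have := hfO _ hmem
    rw [map_smul, smul_eq_mul, div_mul_cancel₀ _ hfi.ne'] at this
    exact this.false
  have haC : ∀ c ∈ C, 0 < ∑ i, a i * c i := fun c hc => by
    have hf := LinearMap.pi_apply_eq_sum_univ f.toLinearMap c
    simp only [ContinuousLinearMap.coe_coe, smul_eq_mul] at hf
    have : ∑ i, a i * c i = -f c := by
      rw [hf, ← Finset.sum_neg_distrib]; exact Finset.sum_congr rfl fun i _ => by ring
    linarith [hfC c hc]
  obtain ⟨c₀, hc₀⟩ := hne
  obtain ⟨i₀, -, hi₀⟩ := Finset.exists_ne_zero_of_sum_ne_zero (haC c₀ hc₀).ne'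
  have hs : 0 < ∑ i, a i :=
    lt_of_lt_of_le (lt_of_le_of_ne (ha i₀) (left_ne_zero_of_mul hi₀).symm)
      (Finset.single_le_sum (fun i _ => ha i) (Finset.mem_univ i₀))
  refine ⟨fun i => a i / ∑ j, a j,
    ⟨fun i => div_nonneg (ha i) hs.le, by rw [← Finset.sum_div, div_self hs.ne']⟩,
    fun c hc => ?_⟩
  simp_rw [div_mul_eq_mul_div, ← Finset.sum_div]
  exact div_pos (haC c hc) hs

section

variable {E : Type*} [NormedAddCommGroup E] [NormedSpace ℝ E]

theorem sum_sum_mul_apply_sub_nonpos {ι : Type*} [Fintype ι] (z : ι → E)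
    (zs : ι → StrongDual ℝ E) (hmono : ∀ i j, 0 ≤ (zs i - zs j) (z i - z j))
    {t : ι → ℝ} (ht : ∀ i, 0 ≤ t i) :
    ∑ i, ∑ j, t i * t j * zs i (z j - z i) ≤ 0 := by
  have hpair : ∀ i j, t i * t j * zs i (z j - z i) + t j * t i * zs j (z i - z j)
      = -(t i * t j * (zs i - zs j) (z i - z j)) := fun i j => by
    simp only [sub_apply, map_sub]; ring
  have h2 : 2 * ∑ i, ∑ j, t i * t j * zs i (z j - z i)
      = ∑ i, ∑ j, -(t i * t j * (zs i - zs j) (z i - z j)) := by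
    rw [two_mul]
    nth_rewrite 2 [Finset.sum_comm]
    simp only [← Finset.sum_add_distrib, hpair]
  have : ∑ i, ∑ j, -(t i * t j * (zs i - zs j) (z i - z j)) ≤ 0 :=
    Finset.sum_nonpos fun i _ => Finset.sum_nonpos fun j _ =>
      neg_nonpos.2 (mul_nonneg (mul_nonneg (ht i) (ht j)) (hmono i j))
  linarith

theorem sum_mul_apply_sub_le {ι : Type*} [Fintype ι] {M : ℝ} (z : ι → E)
    (zs : ι → StrongDual ℝ E) (hmono : ∀ i j, 0 ≤ (zs i - zs j) (z i - z j))
    (hb : ∀ i, ‖zs i‖ ≤ M) {t : ι → ℝ} (ht : t ∈ stdSimplex ℝ ι) (y : E) :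
    ∑ i, t i * zs i (y - z i) ≤ M * ‖y - ∑ i, t i • z i‖ := by
  set zbar := ∑ i, t i • z i
  have hsplit : ∀ i, zs i (y - z i) = zs i (y - zbar) + ∑ j, t j * zs i (z j - z i) := fun i => by
    have : zbar - z i = ∑ j, t j • (z j - z i) := by
      simp only [smul_sub, Finset.sum_sub_distrib, ← Finset.sum_smul, ht.2, one_smul, zbar]
    rw [← sub_add_sub_cancel y zbar (z i), map_add, this, map_sum]
    simp only [map_smul, smul_eq_mul]
  calc ∑ i, t i * zs i (y - z i)
      = ∑ i, t i * zs i (y - zbar) + ∑ i, ∑ j, t i * t j * zs i (z j - z i) := by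
        simp only [hsplit, mul_add, Finset.sum_add_distrib, Finset.mul_sum, mul_assoc]
    _ ≤ ∑ i, t i * (M * ‖y - zbar‖) + 0 := by
        gcongr with i
        · exact ht.1 i
        · exact (le_abs_self _).trans ((zs i).le_of_opNorm_le (hb i) _)
        · exact sum_sum_mul_apply_sub_nonpos z zs hmono ht.1
    _ = M * ‖y - zbar‖ := by rw [← Finset.sum_mul, ht.2, one_mul, add_zero]

theorem exists_norm_le_forall_apply_sub_nonneg {ι : Type*} [Fintype ι] {M : ℝ} (hM0 : 0 ≤ M)
    (z : ι → E) (zs : ι → StrongDual ℝ E) (hmono : ∀ i j, 0 ≤ (zs i - zs j) (z i - z j))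
    (hb : ∀ i, ‖zs i‖ ≤ M) (y : E) :
    ∃ w : StrongDual ℝ E, ‖w‖ ≤ M ∧ ∀ i, 0 ≤ (w - zs i) (y - z i) := by
  by_contra! h
  set K : Set (WeakDual ℝ E) := WeakDual.toStrongDual ⁻¹' Metric.closedBall 0 M
  let L : WeakDual ℝ E →ₗ[ℝ] ι → ℝ :=
    { toFun := fun w i => w (y - z i), map_add' := fun _ _ => rfl, map_smul' := fun _ _ => rfl }
  let Ψ : WeakDual ℝ E →ᵃ[ℝ] ι → ℝ := AffineMap.const ℝ _ (fun i => zs i (y - z i)) - L.toAffineMap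
  have hΨ : ∀ w i, Ψ w i = zs i (y - z i) - w (y - z i) := fun _ _ => rfl
  have hΨcont : Continuous Ψ :=
    continuous_pi fun i => by
      simp only [hΨ]; exact continuous_const.sub (WeakDual.eval_continuous _)
  obtain ⟨t, ht, hpos⟩ := exists_mem_stdSimplex_forall_pos
    ((WeakDual.isCompact_closedBall 0 M).image hΨcont)
    (((convex_closedBall 0 M).linear_preimage WeakDual.toStrongDual.toLinearMap).affine_image Ψ)
    ⟨Ψ 0, 0, by simpa [K] using hM0, rfl⟩
    (by
      rintro _ ⟨w, hw, rfl⟩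
      obtain ⟨i, hi⟩ := h (WeakDual.toStrongDual w) (by simpa [K] using hw)
      exact ⟨i, by rw [hΨ]; simpa [sub_apply] using hi⟩)
  set zbar := ∑ i, t i • z i
  obtain ⟨g, hg, hgy⟩ := exists_dual_vector'' ℝ (y - zbar)
  have hw₀ : WeakDual.toStrongDual.symm (M • g) ∈ K := by
    have : ‖M • g‖ ≤ M := by
      rw [norm_smul, Real.norm_of_nonneg hM0]; exact mul_le_of_le_one_right hM0 hg
    simpa [K] using this
  have hyz : y - zbar = ∑ i, t i • (y - z i) := by
    simp only [smul_sub, Finset.sum_sub_distrib, ← Finset.sum_smul, ht.2, one_smul, zbar]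
  have hg₀ : M * ‖y - zbar‖ = ∑ i, t i * (M • g) (y - z i) := by
    rw [RCLike.ofReal_real_eq_id, id] at hgy
    rw [← hgy, ← smul_eq_mul, ← smul_apply, hyz, map_sum]
    simp only [map_smul, smul_eq_mul]
  have hval : ∑ i, t i * Ψ (WeakDual.toStrongDual.symm (M • g)) i
      = ∑ i, t i * zs i (y - z i) - M * ‖y - zbar‖ := by
    simp only [hΨ, mul_sub, Finset.sum_sub_distrib, hg₀]
    rfl
  linarith [hpos _ ⟨_, hw₀, rfl⟩, sum_mul_apply_sub_le z zs hmono hb ht y]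

def MonotonicallyRelated (S : E → Set (StrongDual ℝ E)) (x : E) (xs : StrongDual ℝ E) : Prop :=
  ∀ y ys, ys ∈ S y → 0 ≤ (xs - ys) (x - y)

/-- Debrunner–Flor lemma. -/
theorem IsMonotoneOp.exists_norm_le_monotonicallyRelated {S : E → Set (StrongDual ℝ E)}
    (hS : IsMonotoneOp S) {M : ℝ} (hM0 : 0 ≤ M) (hb : ∀ y us, us ∈ S y → ‖us‖ ≤ M) (x : E) :
    ∃ w : StrongDual ℝ E, ‖w‖ ≤ M ∧ MonotonicallyRelated S x w := by
  let Z : {p : E × StrongDual ℝ E // p.2 ∈ S p.1} → Set (WeakDual ℝ E) :=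
    fun p => {w | 0 ≤ (WeakDual.toStrongDual w - p.1.2) (x - p.1.1)}
  have hZ : ∀ p, IsClosed (Z p) := fun p =>
    isClosed_le continuous_const ((WeakDual.eval_continuous _).sub continuous_const)
  obtain ⟨w, hwM, hwZ⟩ := (WeakDual.isCompact_closedBall 0 M).inter_iInter_nonempty Z hZ fun u => by
    obtain ⟨w, hwM, hw⟩ := exists_norm_le_forall_apply_sub_nonneg (ι := u) hM0
      (fun p => p.1.1.1) (fun p => p.1.1.2) (fun i j => hS i.1.2 j.1.2) (fun i => hb _ _ i.1.2) x
    exact ⟨WeakDual.toStrongDual.symm w, by simpa using hwM,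
      Set.mem_iInter₂.2 fun p hp => hw ⟨p, hp⟩⟩
  exact ⟨WeakDual.toStrongDual w, by simpa using hwM,
    fun y ys hy => Set.mem_iInter.1 hwZ ⟨(y, ys), hy⟩⟩

theorem IsMaxMonotoneOp.exists_mem_graph {S : E → Set (StrongDual ℝ E)}
    (hS : IsMaxMonotoneOp S) : ∃ y us, us ∈ S y := by
  by_contra! h
  exact h 0 0 (hS.2 0 0 fun y ys hy => (h y ys hy).elim)

theorem IsMaxMonotoneOp.exists_mem_norm_le {S : E → Set (StrongDual ℝ E)}
    (hS : IsMaxMonotoneOp S) {M : ℝ} (hb : ∀ y us, us ∈ S y → ‖us‖ ≤ M) (x : E) :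
    ∃ w ∈ S x, ‖w‖ ≤ M := by
  obtain ⟨y, us, hy⟩ := hS.exists_mem_graph
  obtain ⟨w, hwM, hw⟩ :=
    hS.1.exists_norm_le_monotonicallyRelated ((norm_nonneg us).trans (hb y us hy)) hb x
  exact ⟨w, hS.2 x w hw, hwM⟩

theorem Lnum_le_ofReal {T : E → Set (StrongDual ℝ E)} {x : E} {xs : StrongDual ℝ E} {M : ℝ}
    (h : ∀ y ys, ys ∈ T y → y ≠ x → (xs - ys) (y - x) ≤ M * ‖x - y‖) :
    Lnum T x xs ≤ ENNReal.ofReal M :=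
  iSup_le fun y => iSup_le fun ys => iSup_le fun hy => iSup_le fun hyx =>
    ENNReal.ofReal_le_ofReal <|
      (div_le_iff₀ (norm_sub_pos_iff.2 hyx.symm)).2 (h y ys hy hyx)

theorem IsRegularOp.nonempty_of_Lnum_ne_top {T : E → Set (StrongDual ℝ E)} (hT : IsRegularOp T)
    {x : E} {xs : StrongDual ℝ E} (h : Lnum T x xs ≠ ⊤) : (T x).Nonempty := by
  by_contra! hTx
  simp [hT x xs, dnum, hTx] at h

end

theorem stmt1_general (T S : X → Set (StrongDual ℝ X)) (hreg : IsRegularOp T)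
    (hS : IsMaxMonotoneOp S) (M : ℝ) (hM : ∀ y us, us ∈ S y → ‖us‖ ≤ M)
    (x : X) (xs : StrongDual ℝ X)
    (hrel : ∀ y ys us, ys ∈ T y → us ∈ S y → 0 ≤ ((ys + us) - xs) (y - x)) :
    Lnum T x xs ≤ ENNReal.ofReal M ∧ (T x).Nonempty := by
  have hL : Lnum T x xs ≤ ENNReal.ofReal M := Lnum_le_ofReal fun y ys hy _ => by
    obtain ⟨w, hwS, hwM⟩ := hS.exists_mem_norm_le hM y
    have hyw := hrel y ys w hy hwS
    simp only [sub_apply, add_apply] at hyw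
    calc (xs - ys) (y - x) ≤ w (y - x) := by simp only [sub_apply]; linarith
      _ ≤ M * ‖x - y‖ := by
        rw [norm_sub_rev]; exact (le_abs_self _).trans (w.le_of_opNorm_le hwM _)
  exact ⟨hL, hreg.nonempty_of_Lnum_ne_top (ne_top_of_le_ne_top ENNReal.ofReal_ne_top hL)⟩

theorem stmt1 (T S : X → Set (StrongDual ℝ X)) (hT : IsMaxMonotoneOp T) (hreg : IsRegularOp T)
    (hS : IsMaxMonotoneOp S) (M : ℝ) (hM : ∀ y us, us ∈ S y → ‖us‖ ≤ M)
    (x : X) (xs : StrongDual ℝ X)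
    (hrel : ∀ y ys us, ys ∈ T y → us ∈ S y → 0 ≤ ((ys + us) - xs) (y - x)) :
    Lnum T x xs ≤ ENNReal.ofReal M ∧ (T x).Nonempty :=
  stmt1_general T S hreg hS M hM x xs hrel
end

section
/- Let T : X →→ X* be a maximal monotone multifunction, x ∈ X, λ > 0, and suppose L(x, x*, T) = λ < ∞. Then L(x, x*, T + ∂g_{λ,x}) = 0, i.e., (x, x*) is monotonically related to the graph of T + ∂g_{λ,x}. -/
open scoped ENNReal
open NormedSpace Pointwise

variable {X : Type*} [NormedAddCommGroup X] [NormedSpace ℝ X] [CompleteSpace X]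

section

variable {E : Type*} [NormedAddCommGroup E] [NormedSpace ℝ E]

def IsMonotonicallyRelated (T : E → Set (StrongDual ℝ E)) (x : E) (xs : StrongDual ℝ E) : Prop :=
  ∀ y ys, ys ∈ T y → 0 ≤ (ys - xs) (y - x)

theorem Lnum_eq_zero_of_isMonotonicallyRelated {T : E → Set (StrongDual ℝ E)} {x : E}
    {xs : StrongDual ℝ E} (h : IsMonotonicallyRelated T x xs) : Lnum T x xs = 0 := by
  refine nonpos_iff_eq_zero.mp <| iSup₂_le fun y ys => iSup₂_le fun hys _ => ?_
  have hneg : (xs - ys) (y - x) ≤ 0 := by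
    have := h y ys hys
    simp only [sub_apply] at this ⊢
    linarith
  exact (ENNReal.ofReal_eq_zero.mpr (div_nonpos_of_nonpos_of_nonneg hneg (norm_nonneg _))).le

theorem apply_le_of_Lnum_le {T : E → Set (StrongDual ℝ E)} {x : E} {xs : StrongDual ℝ E}
    {l : ℝ} (hl : 0 ≤ l) (hL : Lnum T x xs ≤ ENNReal.ofReal l) {y : E} {ys : StrongDual ℝ E}
    (hys : ys ∈ T y) : (xs - ys) (y - x) ≤ l * ‖y - x‖ := by
  rcases eq_or_ne y x with rfl | hyx
  · simp
  have hquot : ENNReal.ofReal ((xs - ys) (y - x) / ‖x - y‖) ≤ ENNReal.ofReal l :=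
    (le_iSup_of_le y <| le_iSup_of_le ys <| le_iSup_of_le hys <| le_iSup (fun _ => _) hyx).trans hL
  rw [ENNReal.ofReal_le_ofReal_iff hl, norm_sub_rev,
    div_le_iff₀ (norm_pos_iff.mpr (sub_ne_zero.mpr hyx))] at hquot
  exact hquot

theorem le_apply_of_mem_subdiff_norm {x w : E} {l : ℝ} {us : StrongDual ℝ E}
    (hus : us ∈ subdiff (fun w => l * ‖w - x‖) w) : l * ‖w - x‖ ≤ us (w - x) := by
  have h : l * ‖w - x‖ + us (x - w) ≤ l * ‖x - x‖ := hus x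
  rw [← neg_sub w x, map_neg, sub_self, norm_zero, mul_zero] at h
  linarith

/-- `L(x, x*, T) ≤ l` lets monotonicity with `(x, x*)` fail at `w` by at most `l‖w - x‖`, and every
subgradient of `l‖· - x‖` at `w` makes up at least that much. -/
theorem isMonotonicallyRelated_add_subdiff_norm {T : E → Set (StrongDual ℝ E)} {x : E}
    {xs : StrongDual ℝ E} {l : ℝ} (hl : 0 ≤ l) (hL : Lnum T x xs ≤ ENNReal.ofReal l) :
    IsMonotonicallyRelated (fun z => T z + subdiff (fun w => l * ‖w - x‖) z) x xs := by
  rintro w _ ⟨ws, hws, us, hus, rfl⟩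
  have hT := apply_le_of_Lnum_le hl hL hws
  have hsub := le_apply_of_mem_subdiff_norm hus
  simp only [sub_apply, add_apply] at hT ⊢
  linarith

end

theorem stmt3_general (T : X → Set (StrongDual ℝ X)) (x : X) (xs : StrongDual ℝ X)
    (l : ℝ) (hl : 0 < l) (hL : Lnum T x xs = ENNReal.ofReal l) :
    Lnum (fun z => T z + subdiff (fun w => l * ‖w - x‖) z) x xs = 0
    ∧ ∀ w ws us, ws ∈ T w → us ∈ subdiff (fun w' => l * ‖w' - x‖) w →
        0 ≤ ((ws + us) - xs) (w - x) := by
  have hrel := isMonotonicallyRelated_add_subdiff_norm hl.le hL.le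
  exact ⟨Lnum_eq_zero_of_isMonotonicallyRelated hrel,
    fun w ws us hws hus => hrel w _ (Set.add_mem_add hws hus)⟩

theorem stmt3 (T : X → Set (StrongDual ℝ X)) (hT : IsMaxMonotoneOp T) (x : X) (xs : StrongDual ℝ X)
    (l : ℝ) (hl : 0 < l) (hL : Lnum T x xs = ENNReal.ofReal l) :
    Lnum (fun z => T z + subdiff (fun w => l * ‖w - x‖) z) x xs = 0
    ∧ ∀ w ws us, ws ∈ T w → us ∈ subdiff (fun w' => l * ‖w' - x‖) w →
        0 ≤ ((ws + us) - xs) (w - x) :=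
  stmt3_general T x xs l hl hL
end

section
/- Let T : X →→ X* be a regular maximal monotone multifunction. Then T satisfies condition (SM2): whenever C ⊂ X* is nonempty, convex and weak*-compact, x₀ ∈ X, and for every (y, y*) ∈ G(T) there exists x* ∈ C with ⟨y* - x*, y - x₀⟩ ≥ 0, then there exists x₀* ∈ C with x₀* ∈ T(x₀). (Assume as hypothesis that the sum of T with any bounded maximal monotone multifunction, in particular with the subdifferential of any continuous sublinear-type convex function, is maximal monotone.) -/
open scoped ENNReal
open NormedSpace Pointwise

variable {X : Type*} [NormedAddCommGroup X] [NormedSpace ℝ X] [CompleteSpace X]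

/-! The function `f z = max ⟨x₀ - z, C⟩` is finite, convex and `M`-Lipschitz, where `M` bounds `C`
(weak*-compact sets are bounded by Banach–Steinhaus), so `∂f` is a bounded maximal monotone
operator and `T + ∂f` is maximal monotone. The hypothesis on `C` says exactly that `0` is
monotonically related to the graph of `T + ∂f` at `x₀`, hence `0 ∈ T x₀ + ∂f x₀`. Thus some
`x₀* ∈ T x₀` has `-x₀* ∈ ∂f x₀`, i.e. `x₀*` lies below the support function of `C`, and by
Hahn–Banach in the weak* topology `x₀* ∈ C`. -/

open Bornology

section

variable {E : Type*} [NormedAddCommGroup E] [NormedSpace ℝ E]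

theorem isBounded_of_isCompact_toWeakDual [CompleteSpace E] {C : Set (StrongDual ℝ E)}
    (hC : IsCompact (StrongDual.toWeakDual '' C)) : IsBounded C := by
  have := WeakDual.isBounded_iff_isVonNBounded.2 (hC.isVonNBounded ℝ)
  rwa [← WeakDual.isBounded_toWeakDual_preimage_iff_isBounded,
    (StrongDual.toWeakDual (𝕜 := ℝ) (E := E)).injective.preimage_image] at this

theorem le_of_forall_mem_Ioo_le_add_mul {a b K : ℝ} (h : ∀ t ∈ Set.Ioo (0 : ℝ) 1, a ≤ b + t * K) :
    a ≤ b := by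
  have hlim : Filter.Tendsto (fun t : ℝ => b + t * K) (nhdsWithin 0 (Set.Ioi 0)) (nhds b) := by
    have : ContinuousWithinAt (fun t : ℝ => b + t * K) (Set.Ioi 0) 0 := by fun_prop
    simpa using this.tendsto
  refine ge_of_tendsto hlim ?_
  filter_upwards [Ioo_mem_nhdsGT (zero_lt_one' ℝ)] with t ht using h t ht

section Subdifferential

variable {f : E → ℝ}

theorem isMonotoneOp_subdiff : IsMonotoneOp (subdiff f) := by
  intro x xs y ys hx hy
  have h1 := hx y
  have h2 := hy x
  rw [map_sub] at h1 h2
  simp only [sub_apply, map_sub]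
  linarith

theorem mem_subdiff_comp_sub_iff {x₀ z : E} {zs : StrongDual ℝ E} :
    zs ∈ subdiff (fun z => f (x₀ - z)) z ↔ -zs ∈ subdiff f (x₀ - z) := by
  constructor
  · intro h v
    have := h (x₀ - v)
    simp only [sub_sub_cancel, neg_apply, map_sub] at this ⊢
    linarith
  · intro h w
    have := h (x₀ - w)
    simp only [neg_apply, map_sub] at this ⊢
    linarith

variable {M : ℝ}

theorem norm_le_of_mem_subdiff (hf : ∀ z w, f w ≤ f z + M * ‖w - z‖) (hM : 0 ≤ M) {z : E}
    {zs : StrongDual ℝ E} (hzs : zs ∈ subdiff f z) : ‖zs‖ ≤ M := by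
  have key : ∀ u, zs u ≤ M * ‖u‖ := fun u => by
    have := hzs (z + u)
    have := hf z (z + u)
    simp only [add_sub_cancel_left] at *
    linarith
  refine zs.opNorm_le_bound hM fun u => abs_le.2 ⟨?_, key u⟩
  have := key (-u)
  rw [map_neg, norm_neg] at this
  linarith

theorem isMaxMonotoneOp_subdiff (hf : ∀ z w, f w ≤ f z + M * ‖w - z‖)
    (hne : ∀ z, (subdiff f z).Nonempty) : IsMaxMonotoneOp (subdiff f) := by
  refine ⟨isMonotoneOp_subdiff, fun x xs hx w => ?_⟩
  set d := w - x
  suffices xs d ≤ f w - f x by linarith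
  refine le_of_forall_mem_Ioo_le_add_mul (K := M * ‖d‖ + xs d) fun t ⟨ht0, ht1⟩ => ?_
  -- test the monotone relation of `xs` against a subgradient `g` at `z` on the segment `[x, w]`
  set z := x + t • d
  obtain ⟨g, hg⟩ := hne z
  have hxs_le : xs d ≤ g d := by
    have := hx z g hg
    rw [show x - z = -(t • d) by simp [z], map_neg, map_smul, smul_eq_mul,
      sub_apply] at this
    nlinarith
  have hgw : f z + (1 - t) * g d ≤ f w := by
    simpa [show w - z = (1 - t) • d by simp only [z, d]; module] using hg w
  have hfx : f x ≤ f z + M * (t * ‖d‖) := by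
    simpa [z, norm_smul, abs_of_pos ht0] using hf z x
  have := mul_le_mul_of_nonneg_left hxs_le (sub_nonneg.2 ht1.le)
  linarith

end Subdifferential

section SupportFunction

variable {C : Set (StrongDual ℝ E)}

noncomputable def supportFunction (C : Set (StrongDual ℝ E)) (u : E) : ℝ :=
  sSup ((fun c : StrongDual ℝ E => c u) '' C)

theorem isCompact_image_apply (hC : IsCompact (StrongDual.toWeakDual '' C)) (u : E) :
    IsCompact ((fun c : StrongDual ℝ E => c u) '' C) := by
  have := hC.image (WeakDual.eval_continuous u)
  rw [Set.image_image] at this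
  exact this

theorem apply_le_supportFunction (hC : IsCompact (StrongDual.toWeakDual '' C))
    {c : StrongDual ℝ E} (hc : c ∈ C) (u : E) : c u ≤ supportFunction C u :=
  le_csSup (isCompact_image_apply hC u).bddAbove (Set.mem_image_of_mem _ hc)

theorem exists_apply_eq_supportFunction (hne : C.Nonempty)
    (hC : IsCompact (StrongDual.toWeakDual '' C)) (u : E) :
    ∃ c ∈ C, c u = supportFunction C u :=
  (isCompact_image_apply hC u).sSup_mem (hne.image _)

theorem supportFunction_zero (hne : C.Nonempty) : supportFunction C 0 = 0 := by
  simp [supportFunction, hne.image_const]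

theorem supportFunction_le_add (hne : C.Nonempty) (hC : IsCompact (StrongDual.toWeakDual '' C))
    {M : ℝ} (hM : ∀ c ∈ C, ‖c‖ ≤ M) (u v : E) :
    supportFunction C v ≤ supportFunction C u + M * ‖v - u‖ := by
  refine csSup_le (hne.image _) ?_
  rintro _ ⟨c, hc, rfl⟩
  have hcvu : c (v - u) ≤ M * ‖v - u‖ :=
    (le_abs_self _).trans (c.le_of_opNorm_le (hM c hc) _)
  have := apply_le_supportFunction hC hc u
  rw [map_sub] at hcvu
  linarith

theorem mem_subdiff_supportFunction (hC : IsCompact (StrongDual.toWeakDual '' C))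
    {c : StrongDual ℝ E} (hc : c ∈ C) {u : E} (hu : c u = supportFunction C u) :
    c ∈ subdiff (supportFunction C) u := fun w => by
  have := apply_le_supportFunction hC hc w
  rw [← hu, map_sub]
  linarith

theorem mem_of_forall_apply_le_supportFunction (hne : C.Nonempty) (hconv : Convex ℝ C)
    (hC : IsCompact (StrongDual.toWeakDual '' C)) {ys : StrongDual ℝ E}
    (hys : ∀ u, ys u ≤ supportFunction C u) : ys ∈ C := by
  by_contra hmem
  have : LocallyConvexSpace ℝ (WeakDual ℝ E) := WeakBilin.locallyConvexSpace
  obtain ⟨F, r, hFC, hFys⟩ := geometric_hahn_banach_closed_point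
    (hconv.linear_image StrongDual.toWeakDual.toLinearMap) hC.isClosed
    (fun ⟨c, hc, hcys⟩ => hmem (StrongDual.toWeakDual.injective hcys ▸ hc :))
  -- weak*-continuous functionals are evaluations
  obtain ⟨u, rfl⟩ := LinearMap.dualEmbedding_surjective (topDualPairing ℝ E) F
  have : supportFunction C u ≤ r :=
    csSup_le (hne.image _) fun _ ⟨c, hc, hcu⟩ => hcu ▸ (hFC _ ⟨c, hc, rfl⟩).le
  exact (hys u).not_gt (this.trans_lt hFys)

theorem subdiff_supportFunction_zero_subset (hne : C.Nonempty) (hconv : Convex ℝ C)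
    (hC : IsCompact (StrongDual.toWeakDual '' C)) : subdiff (supportFunction C) 0 ⊆ C :=
  fun ys hys => mem_of_forall_apply_le_supportFunction hne hconv hC fun u => by
    simpa [supportFunction_zero hne] using hys u

end SupportFunction

end

theorem stmt5_general (T : X → Set (StrongDual ℝ X))
    (hsum : ∀ S : X → Set (StrongDual ℝ X), IsMaxMonotoneOp S →
      (∃ M : ℝ, ∀ y us, us ∈ S y → ‖us‖ ≤ M) → IsMaxMonotoneOp (fun z => T z + S z))
    (C : Set (StrongDual ℝ X)) (x0 : X) (hC : C.Nonempty) (hconv : Convex ℝ C)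
    (hcomp : IsCompact (StrongDual.toWeakDual '' C))
    (h : ∀ y ys, ys ∈ T y → ∃ xs ∈ C, 0 ≤ (ys - xs) (y - x0)) :
    ∃ x0s ∈ C, x0s ∈ T x0 := by
  obtain ⟨M, hM⟩ := isBounded_iff_forall_norm_le.1 (isBounded_of_isCompact_toWeakDual hcomp)
  have hM0 : 0 ≤ M := (norm_nonneg _).trans (hM _ hC.some_mem)
  set f : X → ℝ := fun z => supportFunction C (x0 - z)
  have hf : ∀ z w, f w ≤ f z + M * ‖w - z‖ := fun z w => by
    simpa [f, norm_sub_rev] using supportFunction_le_add hC hcomp hM (x0 - z) (x0 - w)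
  have hne : ∀ z, (subdiff f z).Nonempty := fun z => by
    obtain ⟨c, hc, hcu⟩ := exists_apply_eq_supportFunction hC hcomp (x0 - z)
    exact ⟨-c, mem_subdiff_comp_sub_iff.2 (by simpa using mem_subdiff_supportFunction hcomp hc hcu)⟩
  have hTf := hsum (subdiff f) (isMaxMonotoneOp_subdiff hf hne)
    ⟨M, fun _ _ => norm_le_of_mem_subdiff hf hM0⟩
  have hrel : ∀ y ws, ws ∈ T y + subdiff f y → 0 ≤ ((0 : StrongDual ℝ X) - ws) (x0 - y) := by
    rintro y _ ⟨ys, hys, zs, hzs, rfl⟩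
    obtain ⟨xs, hxs, hmono⟩ := h y ys hys
    have h1 : xs (x0 - y) ≤ f y := apply_le_supportFunction hcomp hxs _
    have h2 : f y + zs (x0 - y) ≤ f x0 := hzs x0
    have h3 : f x0 = 0 := by simp [f, supportFunction_zero hC]
    simp only [sub_apply, add_apply, zero_apply, map_sub] at hmono h1 h2 ⊢
    linarith
  obtain ⟨ys, hys, zs, hzs, hyz⟩ := hTf.2 x0 0 hrel
  refine ⟨ys, subdiff_supportFunction_zero_subset hC hconv hcomp ?_, hys⟩
  rw [eq_neg_of_add_eq_zero_left hyz]
  simpa using mem_subdiff_comp_sub_iff.1 hzs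

theorem stmt5 (T : X → Set (StrongDual ℝ X)) (hT : IsMaxMonotoneOp T) (hreg : IsRegularOp T)
    (hsum : ∀ S : X → Set (StrongDual ℝ X), IsMaxMonotoneOp S →
      (∃ M : ℝ, ∀ y us, us ∈ S y → ‖us‖ ≤ M) → IsMaxMonotoneOp (fun z => T z + S z))
    (C : Set (StrongDual ℝ X)) (x0 : X) (hC : C.Nonempty) (hconv : Convex ℝ C)
    (hcomp : IsCompact (StrongDual.toWeakDual '' C))
    (h : ∀ y ys, ys ∈ T y → ∃ xs ∈ C, 0 ≤ (ys - xs) (y - x0)) :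
    ∃ x0s ∈ C, x0s ∈ T x0 :=
  stmt5_general T hsum C x0 hC hconv hcomp h
end

section
/- If T : X →→ X* is a maximal monotone multifunction satisfying condition (SM2), then T is regular. -/
open scoped ENNReal
open NormedSpace Pointwise

variable {X : Type*} [NormedAddCommGroup X] [NormedSpace ℝ X] [CompleteSpace X]

/-!
`L ≤ d` is monotonicity plus the operator-norm bound `⟨x* - y'*, y - x⟩ ≤ ‖x* - y'*‖ ‖y - x‖`
for `y'* ∈ T x`. Conversely, if `M = L(x, x*, T)` is finite, then for every `(y, y*) ∈ G(T)`
Hahn–Banach gives a point `c` of the closed ball `B(x*, M)` with `⟨c, y - x⟩ = ⟨x*, y - x⟩ - M ‖y - x‖`,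
so `⟨y* - c, y - x⟩ ≥ 0`. The ball is convex and weak*-compact (Banach–Alaoglu), so (SM2) puts
a point of `T x` in it, i.e. `d(x*, T x) ≤ M`.
-/

section

variable {E : Type*} [NormedAddCommGroup E] [NormedSpace ℝ E] {T : E → Set (StrongDual ℝ E)}

def SatisfiesSM2 (T : E → Set (StrongDual ℝ E)) : Prop :=
  ∀ (C : Set (StrongDual ℝ E)) (x0 : E), C.Nonempty → Convex ℝ C →
    IsCompact (StrongDual.toWeakDual '' C) →
    (∀ y ys, ys ∈ T y → ∃ xs ∈ C, 0 ≤ (ys - xs) (y - x0)) →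
    ∃ x0s ∈ C, x0s ∈ T x0

theorem IsMonotoneOp.Lnum_le_dnum (hT : IsMonotoneOp T) (x : E) (xs : StrongDual ℝ E) :
    Lnum T x xs ≤ dnum T x xs := by
  refine le_iInf₂ fun ys' hys' => iSup₂_le fun y ys => iSup₂_le fun hys hyx => ?_
  refine ENNReal.ofReal_le_ofReal ?_
  have hxy : 0 < ‖x - y‖ := norm_pos_iff.2 (sub_ne_zero.2 (Ne.symm hyx))
  have hmono : 0 ≤ (ys - ys') (y - x) := hT hys hys'
  have hdual : (xs - ys') (y - x) ≤ ‖ys' - xs‖ * ‖x - y‖ := by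
    calc (xs - ys') (y - x) ≤ ‖xs - ys'‖ * ‖y - x‖ := (le_abs_self _).trans ((xs - ys').le_opNorm _)
      _ = ‖ys' - xs‖ * ‖x - y‖ := by rw [norm_sub_rev xs, norm_sub_rev y]
  rw [div_le_iff₀ hxy]
  simp only [sub_apply] at hmono hdual ⊢
  linarith

theorem apply_sub_le_of_Lnum_le {x : E} {xs : StrongDual ℝ E} {M : ℝ} (hM : 0 ≤ M)
    (hL : Lnum T x xs ≤ ENNReal.ofReal M) {y : E} {ys : StrongDual ℝ E} (hys : ys ∈ T y) :
    (xs - ys) (y - x) ≤ M * ‖y - x‖ := by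
  obtain rfl | hyx := eq_or_ne y x
  · simp
  have hxy : 0 < ‖y - x‖ := norm_pos_iff.2 (sub_ne_zero.2 hyx)
  have hquot : ENNReal.ofReal ((xs - ys) (y - x) / ‖x - y‖) ≤ ENNReal.ofReal M := by
    refine le_trans ?_ hL
    exact le_iSup₂_of_le y ys <| le_iSup₂_of_le hys hyx le_rfl
  rw [norm_sub_rev] at hquot
  refine (div_le_iff₀ hxy).1 ?_
  rcases ENNReal.ofReal_le_ofReal_iff'.1 hquot with h | h
  exacts [h, h.trans hM]

theorem isCompact_toWeakDual_closedBall {𝕜 : Type*} [NontriviallyNormedField 𝕜] [ProperSpace 𝕜]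
    {F : Type*} [SeminormedAddCommGroup F] [NormedSpace 𝕜 F] (x' : StrongDual 𝕜 F) (r : ℝ) :
    IsCompact (StrongDual.toWeakDual '' Metric.closedBall x' r) := by
  rw [LinearEquiv.image_eq_preimage_symm]
  exact WeakDual.isCompact_closedBall x' r

theorem exists_mem_closedBall_apply_eq (x' : StrongDual ℝ E) {r : ℝ} (hr : 0 ≤ r) (v : E) :
    ∃ c ∈ Metric.closedBall x' r, c v = x' v - r * ‖v‖ := by
  obtain ⟨g, hg, hgv⟩ := exists_dual_vector'' ℝ v
  refine ⟨x' - r • g, ?_, by simp [hgv]⟩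
  rw [mem_closedBall_iff_norm, sub_sub_cancel_left, norm_neg, norm_smul, Real.norm_of_nonneg hr]
  exact mul_le_of_le_one_right hr hg

theorem SatisfiesSM2.dnum_le_Lnum (hT : SatisfiesSM2 T) (x : E) (xs : StrongDual ℝ E) :
    dnum T x xs ≤ Lnum T x xs := by
  obtain hL | hL := eq_or_ne (Lnum T x xs) ⊤
  · exact hL ▸ le_top
  set M := (Lnum T x xs).toReal
  have hM : 0 ≤ M := ENNReal.toReal_nonneg
  have hLM : Lnum T x xs = ENNReal.ofReal M := (ENNReal.ofReal_toReal hL).symm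
  obtain ⟨x0s, hx0s, hx0sT⟩ := hT (Metric.closedBall xs M) x (Metric.nonempty_closedBall.2 hM)
    (convex_closedBall xs M) (isCompact_toWeakDual_closedBall xs M) fun y ys hys => by
      obtain ⟨c, hc, hcv⟩ := exists_mem_closedBall_apply_eq xs hM (y - x)
      have hbound := apply_sub_le_of_Lnum_le hM hLM.le hys
      refine ⟨c, hc, ?_⟩
      simp only [sub_apply] at hbound ⊢
      linarith
  calc dnum T x xs ≤ ENNReal.ofReal ‖x0s - xs‖ := iInf₂_le x0s hx0sT
    _ ≤ ENNReal.ofReal M := ENNReal.ofReal_le_ofReal (mem_closedBall_iff_norm.1 hx0s)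
    _ = Lnum T x xs := hLM.symm

end

theorem stmt7 (T : X → Set (StrongDual ℝ X)) (hT : IsMaxMonotoneOp T)
    (hSM2 : ∀ (C : Set (StrongDual ℝ X)) (x0 : X), C.Nonempty → Convex ℝ C →
      IsCompact (StrongDual.toWeakDual '' C) →
      (∀ y ys, ys ∈ T y → ∃ xs ∈ C, 0 ≤ (ys - xs) (y - x0)) →
      ∃ x0s ∈ C, x0s ∈ T x0) :
    IsRegularOp T := fun x xs =>
  le_antisymm (hT.1.Lnum_le_dnum x xs) (SatisfiesSM2.dnum_le_Lnum hSM2 x xs)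
end

section
/- Let T : X →→ X* be a regular maximal monotone multifunction, ε ≥ 0, and x* ∈ T^ε(x). Then x ∈ D_T and T^ε(x) = T(x) + εB*. -/
open scoped ENNReal
open NormedSpace Pointwise

variable {X : Type*} [NormedAddCommGroup X] [NormedSpace ℝ X] [CompleteSpace X]

/-!
Regularity turns `z* ∈ T^ε(x)` into `d(z*, T x) ≤ L(x, z*, T) ≤ ε`. Maximality makes `T x`
weak*-closed, so by Banach–Alaoglu the norm distance from `z*` to `T x` is attained, which puts
`z*` in `T x + εB*`. Conversely `T x + εB* ⊆ T^ε(x)` by monotonicity, since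
`|b (x - y)| ≤ ε ‖x - y‖` for `b ∈ εB*`.
-/

open Metric WeakDual

section WeakDual

variable {𝕜 E : Type*} [NontriviallyNormedField 𝕜] [SeminormedAddCommGroup E] [NormedSpace 𝕜 E]

theorem WeakDual.lowerSemicontinuous_norm_sub (z : StrongDual 𝕜 E) :
    LowerSemicontinuous fun f : WeakDual 𝕜 E => ‖toStrongDual f - z‖ :=
  lowerSemicontinuous_iff_isClosed_preimage.2 fun r => by
    convert isClosed_closedBall z r using 1
    ext f
    simp [dist_eq_norm]

theorem WeakDual.exists_mem_norm_sub_le [ProperSpace 𝕜] {S : Set (StrongDual 𝕜 E)}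
    (hS : IsClosed (toStrongDual ⁻¹' S)) {z : StrongDual 𝕜 E} {ε : ℝ}
    (h : ∀ δ > 0, ∃ s ∈ S, ‖s - z‖ ≤ ε + δ) : ∃ s ∈ S, ‖s - z‖ ≤ ε := by
  obtain ⟨s₁, hs₁S, hs₁z⟩ := h 1 one_pos
  set K := toStrongDual ⁻¹' S ∩ toStrongDual ⁻¹' closedBall z (ε + 1)
  have hK : IsCompact K := (isCompact_closedBall z _).inter_left hS
  have hs₁K : StrongDual.toWeakDual s₁ ∈ K := ⟨hs₁S, by simpa [dist_eq_norm] using hs₁z⟩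
  obtain ⟨s, ⟨hsS, -⟩, hmin⟩ :=
    ((lowerSemicontinuous_norm_sub z).lowerSemicontinuousOn K).exists_isMinOn ⟨_, hs₁K⟩ hK
  refine ⟨toStrongDual s, hsS, le_of_forall_pos_le_add fun δ hδ => ?_⟩
  obtain ⟨t, htS, htz⟩ := h (min δ 1) (by positivity)
  have htK : StrongDual.toWeakDual t ∈ K :=
    ⟨htS, by simpa [dist_eq_norm] using htz.trans (add_le_add_right (min_le_right δ 1) ε)⟩
  calc ‖toStrongDual s - z‖ ≤ ‖t - z‖ := hmin htK
    _ ≤ ε + min δ 1 := htz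
    _ ≤ ε + δ := by gcongr; exact min_le_left _ _

end WeakDual

section Enlargement

variable {E : Type*} [NormedAddCommGroup E] [NormedSpace ℝ E]
  {T : E → Set (StrongDual ℝ E)} {ε : ℝ} {x : E} {zs : StrongDual ℝ E}

theorem exists_mem_norm_sub_lt_of_dnum_lt {r : ℝ} (h : dnum T x zs < ENNReal.ofReal r) :
    ∃ ts ∈ T x, ‖ts - zs‖ < r := by
  simp only [dnum, iInf_lt_iff] at h
  obtain ⟨ts, hts, hlt⟩ := h
  exact ⟨ts, hts, (ENNReal.ofReal_lt_ofReal_iff_of_nonneg (norm_nonneg _)).1 hlt⟩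

theorem IsRegularOp.dnum_le_of_mem_Te (hreg : IsRegularOp T) (hzs : zs ∈ Te T ε x) :
    dnum T x zs ≤ ENNReal.ofReal ε := by
  rw [← hreg]
  refine iSup_le fun y => iSup_le fun ys => iSup_le fun hys => iSup_le fun hyx => ?_
  have hpos : 0 < ‖x - y‖ := norm_pos_iff.2 (sub_ne_zero.2 (Ne.symm hyx))
  have hswap : (zs - ys) (y - x) = -((zs - ys) (x - y)) := by rw [← map_neg, neg_sub]
  refine ENNReal.ofReal_le_ofReal ((div_le_iff₀ hpos).2 ?_)
  linarith [hswap, hzs y ys hys]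

theorem IsMaxMonotoneOp.isClosed_preimage_toStrongDual (hT : IsMaxMonotoneOp T) (x : E) :
    IsClosed (toStrongDual ⁻¹' T x : Set (WeakDual ℝ E)) := by
  have hTx : toStrongDual ⁻¹' T x =
      ⋂ (y : E) (ys : StrongDual ℝ E) (_ : ys ∈ T y),
        {f : WeakDual ℝ E | ys (x - y) ≤ f (x - y)} := by
    ext f
    simp only [Set.mem_preimage, Set.mem_iInter, Set.mem_ofPred_eq]
    have hsub : ∀ ys : StrongDual ℝ E, ∀ y,
        0 ≤ (toStrongDual f - ys) (x - y) ↔ ys (x - y) ≤ f (x - y) := fun ys y => by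
      rw [sub_apply, sub_nonneg]; rfl
    refine ⟨fun hf y ys hys => (hsub ys y).1 (hT.1 hf hys),
      fun hf => hT.2 x _ fun y ys hys => (hsub ys y).2 (hf y ys hys)⟩
  rw [hTx]
  exact isClosed_iInter fun y => isClosed_iInter fun ys => isClosed_iInter fun _ =>
    isClosed_le continuous_const (eval_continuous _)

theorem exists_mem_norm_sub_le_of_mem_Te (hT : IsMaxMonotoneOp T) (hreg : IsRegularOp T)
    (hε : 0 ≤ ε) (hzs : zs ∈ Te T ε x) : ∃ ts ∈ T x, ‖ts - zs‖ ≤ ε := by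
  refine exists_mem_norm_sub_le (hT.isClosed_preimage_toStrongDual x) fun δ hδ => ?_
  have hlt : dnum T x zs < ENNReal.ofReal (ε + δ) :=
    (hreg.dnum_le_of_mem_Te hzs).trans_lt
      ((ENNReal.ofReal_lt_ofReal_iff (by linarith)).2 (by linarith))
  obtain ⟨ts, hts, hdist⟩ := exists_mem_norm_sub_lt_of_dnum_lt hlt
  exact ⟨ts, hts, hdist.le⟩

theorem Te_subset_add_closedBall (hT : IsMaxMonotoneOp T) (hreg : IsRegularOp T) (hε : 0 ≤ ε)
    (x : E) : Te T ε x ⊆ T x + closedBall 0 ε := fun zs hzs => by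
  obtain ⟨ts, hts, hdist⟩ := exists_mem_norm_sub_le_of_mem_Te hT hreg hε hzs
  refine ⟨ts, hts, zs - ts, ?_, add_sub_cancel ts zs⟩
  rwa [mem_closedBall, dist_zero_right, norm_sub_rev]

theorem add_closedBall_subset_Te (hT : IsMonotoneOp T) (x : E) :
    T x + closedBall 0 ε ⊆ Te T ε x := by
  rintro _ ⟨ts, hts, b, hb, rfl⟩ y ys hys
  rw [mem_closedBall, dist_zero_right] at hb
  have hbound : |b (x - y)| ≤ ε * ‖x - y‖ :=
    (b.le_opNorm (x - y)).trans (by gcongr)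
  have hsplit : (ts + b - ys) (x - y) = (ts - ys) (x - y) + b (x - y) := by
    rw [add_sub_right_comm, add_apply]
  linarith [hT hts hys, neg_abs_le (b (x - y))]

end Enlargement

theorem stmt10 (T : X → Set (StrongDual ℝ X)) (hT : IsMaxMonotoneOp T) (hreg : IsRegularOp T)
    (ε : ℝ) (hε : 0 ≤ ε) (x : X) (xs : StrongDual ℝ X) (hxs : xs ∈ Te T ε x) :
    (T x).Nonempty ∧ Te T ε x = T x + Metric.closedBall 0 ε := by
  obtain ⟨ts, hts, -⟩ := exists_mem_norm_sub_le_of_mem_Te hT hreg hε hxs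
  exact ⟨⟨ts, hts⟩,
    (Te_subset_add_closedBall hT hreg hε x).antisymm (add_closedBall_subset_Te hT.1 x)⟩
end

section
/- Let T : X →→ X* be a regular maximal monotone multifunction. Define L(x, x*, T^ε) = max(0, sup{⟨x* - y*, y - x⟩/‖x - y‖ - ε - δ : δ ≥ 0, y ≠ x, y* ∈ T^δ(y)}). Then L(x, x*, T^ε) = d(x*, T^ε(x)) for all (x, x*) and ε ≥ 0. -/
open scoped ENNReal
open NormedSpace Pointwise

variable {X : Type*} [NormedAddCommGroup X] [NormedSpace ℝ X] [CompleteSpace X]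

/-- L(x, x*, T^ε), the generalized L for the enlargement. -/
noncomputable def LnumE (T : X → Set (StrongDual ℝ X)) (ε : ℝ) (x : X) (xs : StrongDual ℝ X) : ℝ≥0∞ :=
  ⨆ (δ : ℝ) (_ : 0 ≤ δ) (y : X) (ys : StrongDual ℝ X) (_ : ys ∈ Te T δ y) (_ : y ≠ x),
    ENNReal.ofReal ((xs - ys) (y - x) / ‖x - y‖ - ε - δ)

/-- d(x*, T^ε(x)). -/
noncomputable def dnumE (T : X → Set (StrongDual ℝ X)) (ε : ℝ) (x : X) (xs : StrongDual ℝ X) : ℝ≥0∞ :=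
  ⨅ (ys : StrongDual ℝ X) (_ : ys ∈ Te T ε x), ENNReal.ofReal ‖ys - xs‖

/-! A point `ws ∈ T^ε(x)` bounds every quotient in `L(x, xs, T^ε)`: regularity puts some
`ts ∈ T(y)` within `δ + η` of `ys ∈ T^δ(y)`, and the splitting
`xs - ys = (xs - ws) + (ws - ts) + (ts - ys)` gives `⟨xs - ys, y - x⟩ ≤ (‖ws - xs‖ + ε + δ + η)‖x - y‖`.
Conversely, `T(x) + εB* ⊆ T^ε(x)` by monotonicity, so pushing points of `T(x)` a distance `ε`
towards `xs` gives `d(xs, T^ε(x)) ≤ d(xs, T(x)) - ε = L(x, xs, T) - ε`, and `L(x, xs, T) - ε` is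
at most `L(x, xs, T^ε)` by taking `δ = 0` there. -/

lemma exists_dist_le_and_dist_eq_max_sub {V : Type*} [NormedAddCommGroup V] [NormedSpace ℝ V]
    (a b : V) {r : ℝ} (hr : 0 ≤ r) : ∃ w, dist w a ≤ r ∧ dist w b = max (dist a b - r) 0 := by
  rcases le_or_gt (dist a b) r with hab | hab
  · exact ⟨b, by rwa [dist_comm], by simp [hab]⟩
  · have hd : 0 < dist a b := hr.trans_lt hab
    refine ⟨AffineMap.lineMap a b (r / dist a b), ?_, ?_⟩
    · rw [dist_lineMap_left, Real.norm_of_nonneg (by positivity), div_mul_cancel₀ _ hd.ne']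
    · rw [dist_lineMap_right, Real.norm_of_nonneg (by rw [sub_nonneg, div_le_one hd]; exact hab.le),
        max_eq_left (by linarith), sub_mul, div_mul_cancel₀ _ hd.ne', one_mul]

lemma ENNReal.iInf_sub {ι : Sort*} (f : ι → ℝ≥0∞) {a : ℝ≥0∞} (ha : a ≠ ⊤) :
    (⨅ i, f i) - a = ⨅ i, f i - a :=
  Monotone.map_iInf_of_continuousAt (ENNReal.continuous_sub_right a).continuousAt
    (fun _ _ h => tsub_le_tsub_right h a) (ENNReal.top_sub ha)

section

variable {E : Type*} [NormedAddCommGroup E] [NormedSpace ℝ E] {T : E → Set (StrongDual ℝ E)}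

lemma apply_le_norm_mul_norm (f : StrongDual ℝ E) (v : E) : f v ≤ ‖f‖ * ‖v‖ :=
  (Real.le_norm_self _).trans (f.le_opNorm v)

lemma mem_Te_of_mem_of_norm_sub_le (hT : IsMonotoneOp T) {ε : ℝ} {x : E} {ts ws : StrongDual ℝ E}
    (hts : ts ∈ T x) (hws : ‖ws - ts‖ ≤ ε) : ws ∈ Te T ε x := by
  intro z zs hz
  have hmono : 0 ≤ (ts - zs) (x - z) := hT hts hz
  have hpert : (ts - ws) (x - z) ≤ ε * ‖x - z‖ :=
    (apply_le_norm_mul_norm _ _).trans (by rw [norm_sub_rev]; gcongr)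
  have hsplit : (ws - zs) (x - z) = (ts - zs) (x - z) - (ts - ws) (x - z) := by simp
  linarith

lemma Lnum_le_of_mem_Te {δ : ℝ} {y : E} {ys : StrongDual ℝ E} (hys : ys ∈ Te T δ y) :
    Lnum T y ys ≤ ENNReal.ofReal δ := by
  refine iSup₂_le fun z zs => iSup₂_le fun hz hzy => ENNReal.ofReal_le_ofReal ?_
  have hd : 0 < ‖y - z‖ := norm_pos_iff.2 (sub_ne_zero.2 hzy.symm)
  have hflip : (ys - zs) (z - y) = -((ys - zs) (y - z)) := by
    rw [← map_neg, neg_sub]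
  rw [div_le_iff₀ hd, hflip]
  linarith [hys z zs hz]

lemma exists_mem_norm_sub_lt_of_mem_Te (hreg : IsRegularOp T) {δ η : ℝ} (hδ : 0 ≤ δ) (hη : 0 < η)
    {y : E} {ys : StrongDual ℝ E} (hys : ys ∈ Te T δ y) : ∃ ts ∈ T y, ‖ts - ys‖ < δ + η := by
  have hd : dnum T y ys < ENNReal.ofReal (δ + η) := by
    rw [← hreg y ys]
    exact (Lnum_le_of_mem_Te hys).trans_lt ((ENNReal.ofReal_lt_ofReal_iff (by linarith)).2 (by linarith))
  simp only [dnum, iInf_lt_iff] at hd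
  obtain ⟨ts, hts, hlt⟩ := hd
  exact ⟨ts, hts, (ENNReal.ofReal_lt_ofReal_iff (by linarith)).1 hlt⟩

lemma apply_le_of_mem_Te_of_mem {ε : ℝ} {x y : E} {xs ys ws ts : StrongDual ℝ E}
    (hws : ws ∈ Te T ε x) (hts : ts ∈ T y) :
    (xs - ys) (y - x) ≤ (‖ws - xs‖ + ε + ‖ts - ys‖) * ‖x - y‖ := by
  have hsplit : (xs - ys) (y - x) = (xs - ws) (y - x) + (ws - ts) (y - x) + (ts - ys) (y - x) := by
    simp only [sub_apply]; ring
  have h₁ := apply_le_norm_mul_norm (xs - ws) (y - x)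
  have h₂ : (ws - ts) (y - x) ≤ ε * ‖x - y‖ := by
    have := hws y ts hts
    rw [← neg_sub x y, map_neg]
    linarith
  have h₃ := apply_le_norm_mul_norm (ts - ys) (y - x)
  rw [norm_sub_rev xs ws, norm_sub_rev y x] at h₁
  rw [norm_sub_rev y x] at h₃
  linarith

lemma LnumE_le_dnumE (hreg : IsRegularOp T) (ε : ℝ) (x : E) (xs : StrongDual ℝ E) :
    LnumE T ε x xs ≤ dnumE T ε x xs := by
  refine le_iInf₂ fun ws hws => ?_
  refine iSup₂_le fun δ hδ => iSup₂_le fun y ys => iSup₂_le fun hys hyx => ?_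
  refine ENNReal.ofReal_le_ofReal (le_of_forall_pos_le_add fun η hη => ?_)
  obtain ⟨ts, hts, hclose⟩ := exists_mem_norm_sub_lt_of_mem_Te hreg hδ hη hys
  have hd : 0 < ‖x - y‖ := norm_pos_iff.2 (sub_ne_zero.2 hyx.symm)
  have : (xs - ys) (y - x) / ‖x - y‖ ≤ ‖ws - xs‖ + ε + (δ + η) := by
    rw [div_le_iff₀ hd]
    exact (apply_le_of_mem_Te_of_mem hws hts).trans
      (mul_le_mul_of_nonneg_right (by linarith) hd.le)
  linarith

lemma Lnum_le_LnumE_add (hT : IsMonotoneOp T) (ε : ℝ) (x : E) (xs : StrongDual ℝ E) :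
    Lnum T x xs ≤ LnumE T ε x xs + ENNReal.ofReal ε := by
  refine iSup₂_le fun y ys => iSup₂_le fun hys hyx => ?_
  have hys₀ : ys ∈ Te T 0 y := mem_Te_of_mem_of_norm_sub_le hT hys (by simp)
  calc ENNReal.ofReal ((xs - ys) (y - x) / ‖x - y‖)
      ≤ ENNReal.ofReal ((xs - ys) (y - x) / ‖x - y‖ - ε - 0) + ENNReal.ofReal ε :=
        (ENNReal.ofReal_le_ofReal (by linarith)).trans ENNReal.ofReal_add_le
    _ ≤ LnumE T ε x xs + ENNReal.ofReal ε := by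
        gcongr
        exact le_iSup₂_of_le 0 le_rfl (le_iSup₂_of_le y ys (le_iSup₂_of_le hys₀ hyx le_rfl))

lemma dnumE_le_dnum_sub (hT : IsMonotoneOp T) {ε : ℝ} (hε : 0 ≤ ε) (x : E) (xs : StrongDual ℝ E) :
    dnumE T ε x xs ≤ dnum T x xs - ENNReal.ofReal ε := by
  simp only [dnum, ENNReal.iInf_sub _ ENNReal.ofReal_ne_top]
  refine le_iInf₂ fun ts hts => ?_
  obtain ⟨ws, hws, hdist⟩ := exists_dist_le_and_dist_eq_max_sub ts xs hε
  simp only [dist_eq_norm] at hws hdist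
  calc dnumE T ε x xs ≤ ENNReal.ofReal ‖ws - xs‖ :=
        iInf₂_le ws (mem_Te_of_mem_of_norm_sub_le hT hts hws)
    _ = ENNReal.ofReal ‖ts - xs‖ - ENNReal.ofReal ε := by
        rw [hdist, ENNReal.ofReal_max, ENNReal.ofReal_zero, max_eq_left zero_le,
          ENNReal.ofReal_sub _ hε]

end

theorem stmt13 (T : X → Set (StrongDual ℝ X)) (hT : IsMaxMonotoneOp T) (hreg : IsRegularOp T)
    (ε : ℝ) (hε : 0 ≤ ε) (x : X) (xs : StrongDual ℝ X) :
    LnumE T ε x xs = dnumE T ε x xs := by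
  refine le_antisymm (LnumE_le_dnumE hreg ε x xs) ?_
  calc dnumE T ε x xs ≤ dnum T x xs - ENNReal.ofReal ε := dnumE_le_dnum_sub hT.1 hε x xs
    _ = Lnum T x xs - ENNReal.ofReal ε := by rw [hreg x xs]
    _ ≤ LnumE T ε x xs := tsub_le_iff_right.2 (Lnum_le_LnumE_add hT.1 ε x xs)
end

section
/- Let T : X →→ X* be a regular maximal monotone multifunction and ε > 0. If T_ε(x) ≠ ∅ then x belongs to the closure of D_T; i.e. D_{T_ε} ⊆ cl(D_T). -/
open scoped ENNReal
open NormedSpace Pointwise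

variable {X : Type*} [NormedAddCommGroup X] [NormedSpace ℝ X] [CompleteSpace X]

/-! If `x` lies at distance `r > 0` from `D_T`, then `-ε ≥ -(ε / r) ‖x - y‖` for every `y ∈ D_T`, so
`T_ε(x) ⊆ T^{ε/r}(x)`. For regular `T`, an element of `T^η(x)` bounds `L(x, x*, T)` by `η`, hence
`d(x*, T(x)) < ∞`, which forces `T(x) ≠ ∅`: a contradiction with `x ∉ cl D_T`. -/

section

variable {E : Type*} [NormedAddCommGroup E] [NormedSpace ℝ E]

theorem Tlow_subset_Te {T : E → Set (StrongDual ℝ E)} {ε r : ℝ} {x : E} (hε : 0 ≤ ε) (hr : 0 < r)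
    (hfar : ∀ y ys, ys ∈ T y → r ≤ ‖x - y‖) : Tlow T ε x ⊆ Te T (ε / r) x := by
  intro xs hxs y ys hys
  have hscale : ε ≤ ε / r * ‖x - y‖ := by
    rw [div_mul_eq_mul_div, le_div_iff₀ hr]
    exact mul_le_mul_of_nonneg_left (hfar y ys hys) hε
  linarith [hxs y ys hys]

theorem Lnum_le_of_mem_Te_s17 {T : E → Set (StrongDual ℝ E)} {η : ℝ} {x : E} {xs : StrongDual ℝ E}
    (hxs : xs ∈ Te T η x) : Lnum T x xs ≤ ENNReal.ofReal η := by
  refine iSup₂_le fun y ys => iSup₂_le fun hys hyx => ENNReal.ofReal_le_ofReal ?_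
  have hpos : 0 < ‖x - y‖ := norm_pos_iff.mpr (sub_ne_zero.mpr hyx.symm)
  have hflip : (xs - ys) (y - x) = -(xs - ys) (x - y) := by
    rw [← map_neg, neg_sub]
  rw [div_le_iff₀ hpos, hflip]
  linarith [hxs y ys hys]

theorem nonempty_of_dnum_ne_top {T : E → Set (StrongDual ℝ E)} {x : E} {xs : StrongDual ℝ E}
    (h : dnum T x xs ≠ ⊤) : (T x).Nonempty := by
  contrapose! h
  simp [dnum, h]

theorem IsRegularOp.nonempty_of_Te_nonempty {T : E → Set (StrongDual ℝ E)} (hreg : IsRegularOp T)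
    {η : ℝ} {x : E} (hx : (Te T η x).Nonempty) : (T x).Nonempty := by
  obtain ⟨xs, hxs⟩ := hx
  apply nonempty_of_dnum_ne_top (xs := xs)
  rw [← hreg x xs]
  exact ne_top_of_le_ne_top ENNReal.ofReal_ne_top (Lnum_le_of_mem_Te_s17 hxs)

end

theorem stmt17_general (T : X → Set (StrongDual ℝ X)) (hreg : IsRegularOp T)
    (ε : ℝ) (hε : 0 < ε) (x : X) (hx : (Tlow T ε x).Nonempty) :
    x ∈ closure {y : X | (T y).Nonempty} := by
  by_contra hcl
  obtain ⟨r, hr, hfar⟩ : ∃ r > 0, ∀ y, (T y).Nonempty → r ≤ dist x y := by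
    simpa [Metric.mem_closure_iff] using hcl
  have hTe : (Te T (ε / r) x).Nonempty :=
    hx.mono (Tlow_subset_Te hε.le hr fun y ys hys => dist_eq_norm x y ▸ hfar y ⟨ys, hys⟩)
  exact hcl (subset_closure (hreg.nonempty_of_Te_nonempty hTe))

theorem stmt17 (T : X → Set (StrongDual ℝ X)) (hT : IsMaxMonotoneOp T) (hreg : IsRegularOp T)
    (ε : ℝ) (hε : 0 < ε) (x : X) (hx : (Tlow T ε x).Nonempty) :
    x ∈ closure {y : X | (T y).Nonempty} :=
  stmt17_general T hreg ε hε x hx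
end
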